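/- If r ∈ ℚ \ ℤ with r ≥ 4, then there is no multiset (n₁,…,n_s) of positive integers with ρ_r(n₁)+⋯+ρ_r(n_s) = r, where ρ_r(0)=0 and ρ_r(n+1) = r/(r − ρ_r(n)). -/

import Mathlib

/-!
Let `p` be a prime dividing the denominator of `r`, so that `|r|_p > 1`. If `|x|_p ≤ 1` then the
ultrametric inequality gives `|r - x|_p = |r|_p`, hence `|r / (r - x)|_p = 1`; by induction every
`ρ_r(n)` is a `p`-adic integer, and so is any sum of them, which therefore cannot equal `r`.
-/

def rhoSeq {K : Type*} [DivisionRing K] (r : K) : ℕ → K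
  | 0 => 0
  | n + 1 => r / (r - rhoSeq r n)

section rhoSeq

variable {K L : Type*} [DivisionRing K] [DivisionRing L]

theorem eq_rhoSeq {r : K} {s : ℕ → K} (h0 : s 0 = 0) (hs : ∀ n, s (n + 1) = r / (r - s n)) :
    s = rhoSeq r := by
  funext n
  induction n with
  | zero => exact h0
  | succ n ih => rw [hs, ih, rhoSeq]

theorem map_rhoSeq (f : K →+* L) (r : K) (n : ℕ) : f (rhoSeq r n) = rhoSeq (f r) n := by
  induction n with
  | zero => simp [rhoSeq]
  | succ n ih => rw [rhoSeq, rhoSeq, map_div₀, map_sub, ih]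

end rhoSeq

section Nonarchimedean

variable {K S : Type*} [Field K] [Field S] [LinearOrder S] [IsStrictOrderedRing S]
  {v : AbsoluteValue K S}

theorem IsNonarchimedean.abv_rhoSeq_le_one (hv : IsNonarchimedean v) {r : K} (hr : 1 < v r)
    (n : ℕ) : v (rhoSeq r n) ≤ 1 := by
  induction n with
  | zero => simp [rhoSeq]
  | succ n ih =>
    have hsub : v (r - rhoSeq r n) = v r := by
      rw [sub_eq_add_neg]
      exact hv.add_eq_left_of_lt (by rw [map_neg_eq_map]; exact ih.trans_lt hr)
    rw [rhoSeq, map_div₀, hsub, div_self (zero_lt_one.trans hr).ne']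

theorem IsNonarchimedean.multiset_sum_map_rhoSeq_ne (hv : IsNonarchimedean v) {r : K}
    (hr : 1 < v r) (M : Multiset ℕ) : (M.map (rhoSeq r)).sum ≠ r := by
  obtain ⟨n, -, hn⟩ := hv.multiset_image_add (rhoSeq r) M
  intro hsum
  rw [hsum] at hn
  exact (hn.trans (hv.abv_rhoSeq_le_one hr n)).not_gt hr

end Nonarchimedean

theorem Rat.AbsoluteValue.isNonarchimedean_padic (p : ℕ) [Fact p.Prime] :
    IsNonarchimedean (Rat.AbsoluteValue.padic p) := fun x y => by
  simp only [Rat.AbsoluteValue.padic_eq_padicNorm]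
  exact_mod_cast padicNorm.nonarchimedean

theorem one_lt_padicNorm_of_dvd_den {p : ℕ} [hp : Fact p.Prime] {q : ℚ} (h : p ∣ q.den) :
    1 < padicNorm p q := by
  have hnum : padicNorm p q.num = 1 := by
    refine (padicNorm.int_eq_one_iff _).2 fun hdvd => hp.out.ne_one ?_
    exact (q.reduced.coprime_dvd_left (Int.ofNat_dvd_left.1 hdvd)).eq_one_of_dvd h
  have hden : padicNorm p q.den < 1 := (padicNorm.nat_lt_one_iff _).2 h
  have hden0 : 0 < padicNorm p q.den :=
    (padicNorm.nonneg _).lt_of_ne (padicNorm.nonzero (by exact_mod_cast q.den_ne_zero)).symm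
  rw [← q.num_div_den, padicNorm.div, hnum]
  exact one_lt_one_div hden0 hden

theorem Rat.exists_prime_one_lt_padicNorm {q : ℚ} (hq : q.den ≠ 1) :
    ∃ p : ℕ, ∃ _ : Fact p.Prime, 1 < padicNorm p q := by
  obtain ⟨p, hp, hpd⟩ := Nat.exists_prime_and_dvd hq
  have : Fact p.Prime := ⟨hp⟩
  exact ⟨p, this, one_lt_padicNorm_of_dvd_den hpd⟩

theorem stmt_5 (r : ℚ) (hrZ : ¬ ∃ z : ℤ, (z : ℚ) = r)
    (rho : ℕ → ℝ) (hrho0 : rho 0 = 0)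
    (hrho : ∀ n : ℕ, rho (n + 1) = (r : ℝ) / ((r : ℝ) - rho n)) :
    ¬ ∃ M : Multiset ℕ, M ≠ 0 ∧ (∀ n ∈ M, 0 < n) ∧ (M.map rho).sum = (r : ℝ) := by
  rintro ⟨M, -, -, hsum⟩
  have hrho_cast : rho = fun n => ((rhoSeq r n : ℚ) : ℝ) := by
    rw [eq_rhoSeq hrho0 hrho]
    funext n
    exact (map_rhoSeq (Rat.castHom ℝ) r n).symm
  have hsumQ : (M.map (rhoSeq r)).sum = r := by
    apply Rat.cast_injective (α := ℝ)
    rw [Rat.cast_multiset_sum, Multiset.map_map, ← hsum, hrho_cast]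
    rfl
  obtain ⟨p, _, hp⟩ :=
    Rat.exists_prime_one_lt_padicNorm fun h => hrZ ⟨r.num, r.den_eq_one_iff.1 h⟩
  refine (Rat.AbsoluteValue.isNonarchimedean_padic p).multiset_sum_map_rhoSeq_ne ?_ M hsumQ
  rw [Rat.AbsoluteValue.padic_eq_padicNorm]
  exact_mod_cast hp
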